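/- arXiv:1904.06176 — 3 statements merged into one kernel-verified Lean document; each statement's English description precedes it below -/
import Mathlib

section
/- For every n ≥ 1, every multi-index α, every composition Z^α ∈ γ^{|α|}, and every smooth function f(t,x,v) on ℝ × ℝⁿ_x × ℝⁿ_v, the free transport operator commutes with Z^α: T(Z^α f) = Z^α(T f). -/
noncomputable section

open MeasureTheory Real

/-- `E n` is the Euclidean space `ℝⁿ`. -/
abbrev E (n : ℕ) : Type := EuclideanSpace ℝ (Fin n)

/-- Index set for the commuting vector fields: spatial translations `∂_{xⁱ}`,
uniform motions `t∂_{xⁱ} + ∂_{vⁱ}` (macroscopically `t∂_{xⁱ}`),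
rotations `Ωˣᵢⱼ + Ωᵛᵢⱼ` for `i < j` (macroscopically `Ωˣᵢⱼ`),
and the scaling `Sˣ + Sᵛ` (macroscopically `Sˣ`). -/
abbrev VFIdx (n : ℕ) : Type := Fin n ⊕ Fin n ⊕ {p : Fin n × Fin n // p.1 < p.2} ⊕ Unit

variable {n : ℕ}

/-- Partial derivative of `g : ℝⁿ → ℝ` at `x` in the `i`-th coordinate direction. -/
def pd (i : Fin n) (g : E n → ℝ) (x : E n) : ℝ :=
  fderiv ℝ g x (EuclideanSpace.single i 1)

/-- Iterated coordinate partial derivatives `∂ₓ^α`. -/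
def pdList (ds : List (Fin n)) (g : E n → ℝ) : E n → ℝ :=
  ds.foldr (fun i h => pd i h) g

/-- The action of a microscopic vector field of the family `γ`
on a function `f(t,x,v)`. -/
def microApply (Z : VFIdx n) (f : ℝ → E n → E n → ℝ) : ℝ → E n → E n → ℝ :=
  fun t x v =>
    match Z with
    | Sum.inl i => pd i (fun y => f t y v) x
    | Sum.inr (Sum.inl i) => t * pd i (fun y => f t y v) x + pd i (fun w => f t x w) v
    | Sum.inr (Sum.inr (Sum.inl p)) =>
        x p.1.1 * pd p.1.2 (fun y => f t y v) x - x p.1.2 * pd p.1.1 (fun y => f t y v) x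
          + v p.1.1 * pd p.1.2 (fun w => f t x w) v - v p.1.2 * pd p.1.1 (fun w => f t x w) v
    | Sum.inr (Sum.inr (Sum.inr _)) =>
        (∑ i, x i * pd i (fun y => f t y v) x) + ∑ i, v i * pd i (fun w => f t x w) v

/-- The action of a macroscopic vector field of the family `Γ`
on a function `φ(t,x)`. -/
def macroApply (Z : VFIdx n) (φ : ℝ → E n → ℝ) : ℝ → E n → ℝ :=
  fun t x =>
    match Z with
    | Sum.inl i => pd i (φ t) x
    | Sum.inr (Sum.inl i) => t * pd i (φ t) x
    | Sum.inr (Sum.inr (Sum.inl p)) =>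
        x p.1.1 * pd p.1.2 (φ t) x - x p.1.2 * pd p.1.1 (φ t) x
    | Sum.inr (Sum.inr (Sum.inr _)) => ∑ i, x i * pd i (φ t) x

/-- Composition `Z^α = Z^{α₁} ⋯ Z^{α_k}` of microscopic vector fields. -/
def microList (L : List (VFIdx n)) (f : ℝ → E n → E n → ℝ) : ℝ → E n → E n → ℝ :=
  L.foldr microApply f

/-- Composition `Z^α = Z^{α₁} ⋯ Z^{α_k}` of macroscopic vector fields. -/
def macroList (L : List (VFIdx n)) (φ : ℝ → E n → ℝ) : ℝ → E n → ℝ :=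
  L.foldr macroApply φ

/-- Velocity average `ρ(f)(t,x) = ∫ f(t,x,v) dv`. -/
def rho (f : ℝ → E n → E n → ℝ) (t : ℝ) (x : E n) : ℝ := ∫ v : E n, f t x v

/-- The spatial Laplacian. -/
def lap (g : E n → ℝ) (x : E n) : ℝ := ∑ i, pd i (fun y => pd i g y) x

/-- The free transport operator `T(f) = ∂_t f + v·∇ₓ f`. -/
def Tfree (f : ℝ → E n → E n → ℝ) : ℝ → E n → E n → ℝ :=
  fun t x v => deriv (fun s => f s x v) t + ∑ i, v i * pd i (fun y => f t y v) x

/-- The perturbed transport operator `T_φ(f) = ∂_t f + v·∇ₓ f + μ ∇ₓφ·∇ᵥ f`. -/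
def Tphi (μ : ℝ) (φ : ℝ → E n → ℝ) (f : ℝ → E n → E n → ℝ) : ℝ → E n → E n → ℝ :=
  fun t x v => Tfree f t x v + μ * ∑ i, pd i (φ t) x * pd i (fun w => f t x w) v

/-- The energy `𝓔_N[f](t) = Σ_{|α| ≤ N} ‖Z^α f‖_{L¹(ℝⁿ_x × ℝⁿ_v)}`. -/
def energy (n N : ℕ) (f : ℝ → E n → E n → ℝ) (t : ℝ) : ℝ :=
  ∑ m ∈ Finset.range (N + 1), ∑ α : Fin m → VFIdx n,
    ∫ x : E n, ∫ v : E n, |microList (List.ofFn α) f t x v|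

/-- Smoothness of a function of `(t,x,v)`. -/
def SmoothTXV (n : ℕ) (f : ℝ → E n → E n → ℝ) : Prop :=
  ContDiff ℝ (⊤ : ℕ∞) (fun p : ℝ × E n × E n => f p.1 p.2.1 p.2.2)

/-- Smoothness of a function of `(t,x)`. -/
def SmoothTX (n : ℕ) (φ : ℝ → E n → ℝ) : Prop :=
  ContDiff ℝ (⊤ : ℕ∞) (fun p : ℝ × E n => φ p.1 p.2)

/-- The modified Bessel function of the second kind `K_ν(r)`. -/
def Kfun (ν r : ℝ) : ℝ :=
  ∫ l in Set.Ioi (0 : ℝ), Real.exp (-(r * Real.cosh l)) * Real.cosh (ν * l)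

/-- The Yukawa Green's function `G₁(x) = c |x|^{1-n/2} K_{n/2-1}(|x|)`. -/
def Gyukawa (n : ℕ) (c : ℝ) (x : E n) : ℝ :=
  c * ‖x‖ ^ ((1 : ℝ) - (n : ℝ) / 2) * Kfun ((n : ℝ) / 2 - 1) ‖x‖

/-- Convolution of two scalar functions on `ℝⁿ`. -/
def conv (g h : E n → ℝ) (x : E n) : ℝ := ∫ y : E n, g (x - y) * h y

/-- `k`-fold convolution with `g` (the `0`-fold one being the identity). -/
def convIter (g : E n → ℝ) : ℕ → (E n → ℝ) → E n → ℝ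
  | 0, h => h
  | m + 1, h => conv g (convIter g m h)


namespace FTaux

set_option maxHeartbeats 1000000

variable {n : ℕ}

abbrev P (n : ℕ) := ℝ × E n × E n

lemma sum_single (x : E n) : ∑ i, x i • EuclideanSpace.single i (1:ℝ) = x := by
  ext j
  rw [show (∑ i, x i • EuclideanSpace.single i (1:ℝ)) j
      = ∑ i, (x i • EuclideanSpace.single i (1:ℝ)) j from by rw [WithLp.ofLp_sum, Finset.sum_apply]]
  simp [EuclideanSpace.single_apply, Finset.sum_ite_eq']

lemma pd_x_eq {G : P n → ℝ} {t : ℝ} {x v : E n} (hG : DifferentiableAt ℝ G (t, x, v)) (i : Fin n) :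
    pd i (fun y => G (t, y, v)) x = fderiv ℝ G (t, x, v) (0, EuclideanSpace.single i 1, 0) := by
  have h1 : HasFDerivAt (fun y : E n => ((t : ℝ), y, v))
      ((0 : E n →L[ℝ] ℝ).prod ((ContinuousLinearMap.id ℝ (E n)).prod (0 : E n →L[ℝ] E n))) x :=
    HasFDerivAt.prodMk (hasFDerivAt_const t x) (HasFDerivAt.prodMk (hasFDerivAt_id x) (hasFDerivAt_const v x))
  have h2 : HasFDerivAt (fun y : E n => G (t, y, v))
      ((fderiv ℝ G (t, x, v)).comp
        ((0 : E n →L[ℝ] ℝ).prod ((ContinuousLinearMap.id ℝ (E n)).prod (0 : E n →L[ℝ] E n)))) x :=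
    hG.hasFDerivAt.comp x h1
  rw [pd, h2.fderiv]
  simp

lemma pd_v_eq {G : P n → ℝ} {t : ℝ} {x v : E n} (hG : DifferentiableAt ℝ G (t, x, v)) (i : Fin n) :
    pd i (fun w => G (t, x, w)) v = fderiv ℝ G (t, x, v) (0, 0, EuclideanSpace.single i 1) := by
  have h1 : HasFDerivAt (fun w : E n => ((t : ℝ), x, w))
      ((0 : E n →L[ℝ] ℝ).prod ((0 : E n →L[ℝ] E n).prod (ContinuousLinearMap.id ℝ (E n)))) v :=
    HasFDerivAt.prodMk (hasFDerivAt_const t v) (HasFDerivAt.prodMk (hasFDerivAt_const x v) (hasFDerivAt_id v))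
  have h2 : HasFDerivAt (fun w : E n => G (t, x, w))
      ((fderiv ℝ G (t, x, v)).comp
        ((0 : E n →L[ℝ] ℝ).prod ((0 : E n →L[ℝ] E n).prod (ContinuousLinearMap.id ℝ (E n))))) v :=
    hG.hasFDerivAt.comp v h1
  rw [pd, h2.fderiv]
  simp

lemma deriv_t_eq {G : P n → ℝ} {t : ℝ} {x v : E n} (hG : DifferentiableAt ℝ G (t, x, v)) :
    deriv (fun s => G (s, x, v)) t = fderiv ℝ G (t, x, v) (1, 0, 0) := by
  have h1 : HasFDerivAt (fun s : ℝ => (s, x, v))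
      ((ContinuousLinearMap.id ℝ ℝ).prod (0 : ℝ →L[ℝ] E n × E n)) t :=
    HasFDerivAt.prodMk (hasFDerivAt_id t) (hasFDerivAt_const (x, v) t)
  have h2 : HasDerivAt (fun s : ℝ => G (s, x, v))
      (((fderiv ℝ G (t, x, v)).comp ((ContinuousLinearMap.id ℝ ℝ).prod (0 : ℝ →L[ℝ] E n × E n))) 1) t :=
    (hG.hasFDerivAt.comp t h1).hasDerivAt
  rw [h2.deriv]
  simp
  rfl

def vf (A : P n → P n) (G : P n → ℝ) : P n → ℝ := fun p => fderiv ℝ G p (A p)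

lemma smooth_vf {A : P n → P n} {G : P n → ℝ} (hA : ContDiff ℝ (⊤ : ℕ∞) A) (hG : ContDiff ℝ (⊤ : ℕ∞) G) :
    ContDiff ℝ (⊤ : ℕ∞) (vf A G) :=
  ContDiff.clm_apply (hG.fderiv_right (by simp)) hA

lemma vf_comm {A B : P n → P n} {G : P n → ℝ} (hG : ContDiff ℝ (⊤ : ℕ∞) G)
    (hA : ContDiff ℝ (⊤ : ℕ∞) A) (hB : ContDiff ℝ (⊤ : ℕ∞) B)
    (h : ∀ p, fderiv ℝ B p (A p) = fderiv ℝ A p (B p)) :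
    vf A (vf B G) = vf B (vf A G) := by
  funext p
  have hG' : Differentiable ℝ (fderiv ℝ G) := (hG.fderiv_right (m := (⊤ : ℕ∞)) (by simp)).differentiable (by simp)
  have hGd : Differentiable ℝ G := hG.differentiable (by simp)
  have hAd : Differentiable ℝ A := hA.differentiable (by simp)
  have hBd : Differentiable ℝ B := hB.differentiable (by simp)
  have e1 : fderiv ℝ (vf B G) p =
      (fderiv ℝ G p).comp (fderiv ℝ B p) + (fderiv ℝ (fderiv ℝ G) p).flip (B p) :=
    fderiv_clm_apply (hG' p) (hBd p)
  have e2 : fderiv ℝ (vf A G) p =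
      (fderiv ℝ G p).comp (fderiv ℝ A p) + (fderiv ℝ (fderiv ℝ G) p).flip (A p) :=
    fderiv_clm_apply (hG' p) (hAd p)
  have hsym := second_derivative_symmetric (fun y => (hGd y).hasFDerivAt) (hG' p).hasFDerivAt
  show fderiv ℝ (vf B G) p (A p) = fderiv ℝ (vf A G) p (B p)
  rw [e1, e2]
  simp only [ContinuousLinearMap.add_apply, ContinuousLinearMap.comp_apply,
    ContinuousLinearMap.flip_apply]
  rw [h p, hsym (A p) (B p)]

def AT : P n → P n := fun p => (1, p.2.2, 0)

def Avf : VFIdx n → P n → P n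
  | Sum.inl i => fun _ => (0, EuclideanSpace.single i 1, 0)
  | Sum.inr (Sum.inl i) => fun p => (0, p.1 • EuclideanSpace.single i 1, EuclideanSpace.single i 1)
  | Sum.inr (Sum.inr (Sum.inl q)) => fun p =>
      (0, p.2.1 q.1.1 • EuclideanSpace.single q.1.2 1 - p.2.1 q.1.2 • EuclideanSpace.single q.1.1 1,
          p.2.2 q.1.1 • EuclideanSpace.single q.1.2 1 - p.2.2 q.1.2 • EuclideanSpace.single q.1.1 1)
  | Sum.inr (Sum.inr (Sum.inr _)) => fun p => (0, p.2.1, p.2.2)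

def cxL (i : Fin n) : P n →L[ℝ] ℝ :=
  (EuclideanSpace.proj i : E n →L[ℝ] ℝ).comp
    ((ContinuousLinearMap.fst ℝ (E n) (E n)).comp (ContinuousLinearMap.snd ℝ ℝ (E n × E n)))

def cvL (i : Fin n) : P n →L[ℝ] ℝ :=
  (EuclideanSpace.proj i : E n →L[ℝ] ℝ).comp
    ((ContinuousLinearMap.snd ℝ (E n) (E n)).comp (ContinuousLinearMap.snd ℝ ℝ (E n × E n)))

lemma cxL_apply (i : Fin n) (p : P n) : cxL i p = p.2.1 i := rfl
lemma cvL_apply (i : Fin n) (p : P n) : cvL i p = p.2.2 i := rfl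

lemma coord_x_cd (i : Fin n) : ContDiff ℝ (⊤ : ℕ∞) (fun p : P n => p.2.1 i) := (cxL i).contDiff
lemma coord_v_cd (i : Fin n) : ContDiff ℝ (⊤ : ℕ∞) (fun p : P n => p.2.2 i) := (cvL i).contDiff

lemma smooth_AT : ContDiff ℝ (⊤ : ℕ∞) (AT (n := n)) :=
  ContDiff.prodMk contDiff_const ((contDiff_snd.comp contDiff_snd).prodMk contDiff_const)

lemma smooth_Avf (Z : VFIdx n) : ContDiff ℝ (⊤ : ℕ∞) (Avf Z) := by
  match Z with
  | Sum.inl i => exact contDiff_const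
  | Sum.inr (Sum.inl i) =>
      exact ContDiff.prodMk contDiff_const ((contDiff_fst.smul contDiff_const).prodMk contDiff_const)
  | Sum.inr (Sum.inr (Sum.inl q)) =>
      exact ContDiff.prodMk contDiff_const
        ((((coord_x_cd q.1.1).smul contDiff_const).sub ((coord_x_cd q.1.2).smul contDiff_const)).prodMk
         (((coord_v_cd q.1.1).smul contDiff_const).sub ((coord_v_cd q.1.2).smul contDiff_const)))
  | Sum.inr (Sum.inr (Sum.inr _)) =>
      exact ContDiff.prodMk contDiff_const
        ((contDiff_fst.comp contDiff_snd).prodMk (contDiff_snd.comp contDiff_snd))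

def LTT : P n →L[ℝ] P n :=
  (0 : P n →L[ℝ] ℝ).prod
    (((ContinuousLinearMap.snd ℝ (E n) (E n)).comp (ContinuousLinearMap.snd ℝ ℝ (E n × E n))).prod 0)

lemma hasFDerivAt_AT (p : P n) : HasFDerivAt (AT (n := n)) LTT p := by
  have h : HasFDerivAt (fun q : P n => q.2.2)
      ((ContinuousLinearMap.snd ℝ (E n) (E n)).comp (ContinuousLinearMap.snd ℝ ℝ (E n × E n))) p :=
    hasFDerivAt_snd.comp p hasFDerivAt_snd
  exact HasFDerivAt.prodMk (hasFDerivAt_const 1 p) (h.prodMk (hasFDerivAt_const 0 p))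

lemma hasFDerivAt_coord_x (i : Fin n) (p : P n) :
    HasFDerivAt (fun q : P n => q.2.1 i) (cxL i) p := (cxL i).hasFDerivAt

lemma hasFDerivAt_coord_v (i : Fin n) (p : P n) :
    HasFDerivAt (fun q : P n => q.2.2 i) (cvL i) p := (cvL i).hasFDerivAt

lemma hcomm (Z : VFIdx n) (p : P n) :
    fderiv ℝ (Avf Z) p (AT p) = fderiv ℝ AT p (Avf Z p) := by
  rw [(hasFDerivAt_AT p).fderiv]
  match Z with
  | Sum.inl i =>
      show fderiv ℝ (fun _ : P n => ((0:ℝ), EuclideanSpace.single i 1, (0:E n))) p (AT p) = _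
      rw [fderiv_fun_const]
      simp [LTT, Avf, AT]
      rfl
  | Sum.inr (Sum.inl i) =>
      have h : HasFDerivAt (Avf (n := n) (Sum.inr (Sum.inl i)))
          ((0 : P n →L[ℝ] ℝ).prod
            (((ContinuousLinearMap.fst ℝ ℝ (E n × E n)).smulRight (EuclideanSpace.single i 1)).prod 0)) p :=
        HasFDerivAt.prodMk (hasFDerivAt_const 0 p)
          ((hasFDerivAt_fst.smul_const (EuclideanSpace.single i 1)).prodMk (hasFDerivAt_const _ p))
      rw [h.fderiv]
      simp [LTT, Avf, AT]
  | Sum.inr (Sum.inr (Sum.inl q)) =>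
      have h : HasFDerivAt (Avf (n := n) (Sum.inr (Sum.inr (Sum.inl q))))
          ((0 : P n →L[ℝ] ℝ).prod
            (((cxL q.1.1).smulRight (EuclideanSpace.single q.1.2 1 : E n)
                - (cxL q.1.2).smulRight (EuclideanSpace.single q.1.1 1 : E n)).prod
             ((cvL q.1.1).smulRight (EuclideanSpace.single q.1.2 1 : E n)
                - (cvL q.1.2).smulRight (EuclideanSpace.single q.1.1 1 : E n)))) p :=
        HasFDerivAt.prodMk (hasFDerivAt_const 0 p)
          ((((hasFDerivAt_coord_x q.1.1 p).smul_const _).sub ((hasFDerivAt_coord_x q.1.2 p).smul_const _)).prodMk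
           (((hasFDerivAt_coord_v q.1.1 p).smul_const _).sub ((hasFDerivAt_coord_v q.1.2 p).smul_const _)))
      rw [h.fderiv]
      simp [LTT, Avf, AT, cxL_apply, cvL_apply]
  | Sum.inr (Sum.inr (Sum.inr _)) =>
      have h : HasFDerivAt (Avf (n := n) (Sum.inr (Sum.inr (Sum.inr ()))))
          ((0 : P n →L[ℝ] ℝ).prod
            (((ContinuousLinearMap.fst ℝ (E n) (E n)).comp (ContinuousLinearMap.snd ℝ ℝ (E n × E n))).prod
             ((ContinuousLinearMap.snd ℝ (E n) (E n)).comp (ContinuousLinearMap.snd ℝ ℝ (E n × E n))))) p :=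
        HasFDerivAt.prodMk (hasFDerivAt_const 0 p)
          ((hasFDerivAt_fst.comp p hasFDerivAt_snd).prodMk (hasFDerivAt_snd.comp p hasFDerivAt_snd))
      rw [h.fderiv]
      simp [LTT, Avf, AT]

def J1 : E n →L[ℝ] P n :=
  (0 : E n →L[ℝ] ℝ).prod ((ContinuousLinearMap.id ℝ (E n)).prod 0)

def J2 : E n →L[ℝ] P n :=
  (0 : E n →L[ℝ] ℝ).prod ((0 : E n →L[ℝ] E n).prod (ContinuousLinearMap.id ℝ (E n)))

lemma J1_apply (x : E n) : J1 x = ((0 : ℝ), x, (0 : E n)) := rfl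
lemma J2_apply (v : E n) : J2 v = ((0 : ℝ), (0 : E n), v) := rfl

lemma clm_sum (D : E n →L[ℝ] ℝ) (x : E n) :
    D x = ∑ i, x i * D (EuclideanSpace.single i 1) := by
  conv_lhs => rw [← sum_single x]
  rw [map_sum]
  simp

lemma Dx_sum (D : P n →L[ℝ] ℝ) (x : E n) :
    D ((0 : ℝ), x, (0 : E n)) = ∑ i, x i * D (0, EuclideanSpace.single i 1, 0) := by
  have h := clm_sum (D.comp J1) x
  simpa [J1_apply] using h

lemma Dv_sum (D : P n →L[ℝ] ℝ) (v : E n) :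
    D ((0 : ℝ), (0 : E n), v) = ∑ i, v i * D (0, 0, EuclideanSpace.single i 1) := by
  have h := clm_sum (D.comp J2) v
  simpa [J2_apply] using h

lemma microApply_eq (Z : VFIdx n) (G : P n → ℝ) (hG : Differentiable ℝ G) :
    microApply Z (fun t x v => G (t, x, v)) = fun t x v => vf (Avf Z) G (t, x, v) := by
  funext t x v
  set D := fderiv ℝ G (t, x, v) with hD
  match Z with
  | Sum.inl i =>
      show pd i (fun y => G (t, y, v)) x = _
      rw [pd_x_eq (hG (t, x, v)) i]
      rfl
  | Sum.inr (Sum.inl i) =>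
      show t * pd i (fun y => G (t, y, v)) x + pd i (fun w => G (t, x, w)) v = _
      rw [pd_x_eq (hG (t, x, v)) i, pd_v_eq (hG (t, x, v)) i]
      show _ = D ((0 : ℝ), t • EuclideanSpace.single i 1, EuclideanSpace.single i 1)
      rw [show ((0 : ℝ), t • EuclideanSpace.single i 1, (EuclideanSpace.single i 1 : E n))
          = t • ((0 : ℝ), (EuclideanSpace.single i 1 : E n), (0 : E n))
            + ((0 : ℝ), (0 : E n), (EuclideanSpace.single i 1 : E n)) by
        simp [Prod.ext_iff]]
      rw [map_add, _root_.map_smul]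
      simp
      rfl
  | Sum.inr (Sum.inr (Sum.inl q)) =>
      show x q.1.1 * pd q.1.2 (fun y => G (t, y, v)) x - x q.1.2 * pd q.1.1 (fun y => G (t, y, v)) x
          + v q.1.1 * pd q.1.2 (fun w => G (t, x, w)) v - v q.1.2 * pd q.1.1 (fun w => G (t, x, w)) v = _
      rw [pd_x_eq (hG (t, x, v)), pd_x_eq (hG (t, x, v)), pd_v_eq (hG (t, x, v)),
        pd_v_eq (hG (t, x, v))]
      show _ = D ((0 : ℝ),
          x q.1.1 • EuclideanSpace.single q.1.2 1 - x q.1.2 • EuclideanSpace.single q.1.1 1,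
          v q.1.1 • EuclideanSpace.single q.1.2 1 - v q.1.2 • EuclideanSpace.single q.1.1 1)
      rw [show ((0 : ℝ),
          x q.1.1 • EuclideanSpace.single q.1.2 1 - x q.1.2 • EuclideanSpace.single q.1.1 1,
          v q.1.1 • EuclideanSpace.single q.1.2 1 - v q.1.2 • EuclideanSpace.single q.1.1 1)
          = (x q.1.1 • ((0 : ℝ), (EuclideanSpace.single q.1.2 1 : E n), (0 : E n))
             - x q.1.2 • ((0 : ℝ), (EuclideanSpace.single q.1.1 1 : E n), (0 : E n)))
            + (v q.1.1 • ((0 : ℝ), (0 : E n), (EuclideanSpace.single q.1.2 1 : E n))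
             - v q.1.2 • ((0 : ℝ), (0 : E n), (EuclideanSpace.single q.1.1 1 : E n))) by
        simp [Prod.ext_iff]]
      rw [map_add, map_sub, map_sub, _root_.map_smul, _root_.map_smul, _root_.map_smul, _root_.map_smul]
      simp only [smul_eq_mul]
      ring
  | Sum.inr (Sum.inr (Sum.inr _)) =>
      show (∑ i, x i * pd i (fun y => G (t, y, v)) x) + ∑ i, v i * pd i (fun w => G (t, x, w)) v = _
      simp only [pd_x_eq (hG (t, x, v)), pd_v_eq (hG (t, x, v))]
      show _ = D ((0 : ℝ), x, v)
      rw [show ((0 : ℝ), x, v) = ((0 : ℝ), x, (0 : E n)) + ((0 : ℝ), (0 : E n), v) by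
        simp [Prod.ext_iff], map_add, Dx_sum, Dv_sum]

lemma Tfree_eq (G : P n → ℝ) (hG : Differentiable ℝ G) :
    Tfree (fun t x v => G (t, x, v)) = fun t x v => vf AT G (t, x, v) := by
  funext t x v
  simp only [Tfree]
  rw [deriv_t_eq (hG (t, x, v))]
  simp only [pd_x_eq (hG (t, x, v))]
  set D := fderiv ℝ G (t, x, v) with hD
  show D (1, 0, 0) + ∑ i, v i * D (0, EuclideanSpace.single i 1, 0) = D (AT (t, x, v))
  rw [show AT (n := n) (t, x, v) = ((1 : ℝ), (0 : E n), (0 : E n)) + ((0 : ℝ), v, (0 : E n)) by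
    simp [AT, Prod.ext_iff], map_add, Dx_sum]

def vfL (L : List (VFIdx n)) (G : P n → ℝ) : P n → ℝ := L.foldr (fun Z H => vf (Avf Z) H) G

lemma smooth_vfL (L : List (VFIdx n)) (G : P n → ℝ) (hG : ContDiff ℝ (⊤ : ℕ∞) G) :
    ContDiff ℝ (⊤ : ℕ∞) (vfL L G) := by
  induction L with
  | nil => exact hG
  | cons Z L ih => exact smooth_vf (smooth_Avf Z) ih

lemma vfL_comm (L : List (VFIdx n)) (G : P n → ℝ) (hG : ContDiff ℝ (⊤ : ℕ∞) G) :
    vf AT (vfL L G) = vfL L (vf AT G) := by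
  induction L with
  | nil => rfl
  | cons Z L ih =>
      show vf AT (vf (Avf Z) (vfL L G)) = vf (Avf Z) (vfL L (vf AT G))
      rw [vf_comm (smooth_vfL L G hG) smooth_AT (smooth_Avf Z) (hcomm Z), ih]

lemma microList_eq (L : List (VFIdx n)) (G : P n → ℝ) (hG : ContDiff ℝ (⊤ : ℕ∞) G) :
    microList L (fun t x v => G (t, x, v)) = fun t x v => vfL L G (t, x, v) := by
  induction L with
  | nil => rfl
  | cons Z L ih =>
      show microApply Z (microList L (fun t x v => G (t, x, v))) = _
      rw [ih]
      exact microApply_eq Z (vfL L G) ((smooth_vfL L G hG).differentiable (by simp))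

end FTaux

/-- the free transport operator commutes with every composition
`Z^α` of vector fields from `γ`. -/
theorem free_transport_commutes (n : ℕ) (hn : 1 ≤ n) (L : List (VFIdx n))
    (f : ℝ → E n → E n → ℝ) (hf : SmoothTXV n f) :
    Tfree (microList L f) = microList L (Tfree f) := by
  classical
  have hF : ContDiff ℝ (⊤ : ℕ∞) (fun p : FTaux.P n => f p.1 p.2.1 p.2.2) := hf
  set F : FTaux.P n → ℝ := fun p => f p.1 p.2.1 p.2.2 with hFdef
  have hfc : f = fun t x v => F (t, x, v) := rfl
  have h1 : microList L f = fun t x v => FTaux.vfL L F (t, x, v) := by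
    rw [hfc]; exact FTaux.microList_eq L F hF
  have h2 : Tfree (microList L f) = fun t x v => FTaux.vf FTaux.AT (FTaux.vfL L F) (t, x, v) := by
    rw [h1]
    exact FTaux.Tfree_eq _ ((FTaux.smooth_vfL L F hF).differentiable (by simp))
  have h3 : Tfree f = fun t x v => FTaux.vf FTaux.AT F (t, x, v) := by
    rw [hfc]
    exact FTaux.Tfree_eq F (hF.differentiable (by simp))
  have h4 : microList L (Tfree f) = fun t x v => FTaux.vfL L (FTaux.vf FTaux.AT F) (t, x, v) := by
    rw [h3]
    exact FTaux.microList_eq L _ (FTaux.smooth_vf FTaux.smooth_AT hF)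
  rw [h2, h4, FTaux.vfL_comm L F hF]
end
end

section
/- For every n ≥ 2 there exists a constant C_n > 0, depending only on n, such that for every t ≥ 0 and every x ∈ ℝⁿ: ∫_{ℝⁿ} 1/(|y|^{n−1} (1 + t + |x−y|)^n) dy ≤ C_n (1+t)^{−(n−1)}. -/
noncomputable section

open MeasureTheory Real

variable {n : ℕ}

open Set Metric ENNReal

lemma lintegral_fun_norm_addHaar_aux {E : Type*} [NormedAddCommGroup E] [NormedSpace ℝ E]
    [MeasurableSpace E] [BorelSpace E] [Nontrivial E] [FiniteDimensional ℝ E]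
    (μ : Measure E) [μ.IsAddHaarMeasure] (f : ℝ → ℝ≥0∞) (hf : Measurable f) :
    ∫⁻ x, f ‖x‖ ∂μ = μ.toSphere univ *
      ∫⁻ r in Ioi (0:ℝ), ENNReal.ofReal (r ^ (Module.finrank ℝ E - 1)) * f r := by
  have h2 := (μ.measurePreserving_homeomorphUnitSphereProd).lintegral_comp_emb
    (Homeomorph.measurableEmbedding _) (fun p : sphere (0:E) 1 × Ioi (0:ℝ) => f p.2)
  simp only [homeomorphUnitSphereProd_apply_snd_coe] at h2
  calc ∫⁻ x, f ‖x‖ ∂μ = ∫⁻ x in {(0:E)}ᶜ, f ‖x‖ ∂μ := by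
        rw [MeasureTheory.restrict_compl_singleton]
    _ = ∫⁻ x : ({(0:E)}ᶜ : Set E), f ‖(x:E)‖ ∂(μ.comap (↑)) :=
        (lintegral_subtype_comap (measurableSet_singleton _).compl _).symm
    _ = ∫⁻ p : sphere (0:E) 1 × Ioi (0:ℝ), f p.2
          ∂(μ.toSphere.prod (Measure.volumeIoiPow (Module.finrank ℝ E - 1))) := h2
    _ = μ.toSphere univ * ∫⁻ r : Ioi (0:ℝ), f r ∂(Measure.volumeIoiPow (Module.finrank ℝ E - 1)) := by
        rw [MeasureTheory.lintegral_prod (fun p : sphere (0:E) 1 × Ioi (0:ℝ) => f p.2)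
          (by fun_prop)]
        simp [lintegral_const, mul_comm]
    _ = μ.toSphere univ * ∫⁻ r in Ioi (0:ℝ),
          ENNReal.ofReal (r ^ (Module.finrank ℝ E - 1)) * f r := by
        congr 1
        rw [Measure.volumeIoiPow,
          lintegral_withDensity_eq_lintegral_mul _
            (by fun_prop : Measurable fun r : Ioi (0:ℝ) => ENNReal.ofReal (r.1 ^ (Module.finrank ℝ E - 1)))
            (show Measurable fun r : Ioi (0:ℝ) => f r.1 by fun_prop),
          ← lintegral_subtype_comap measurableSet_Ioi
            (fun r : ℝ => ENNReal.ofReal (r ^ (Module.finrank ℝ E - 1)) * f r)]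
        rfl

lemma integrable_K {n : ℕ} (hn : 2 ≤ n) :
    Integrable (fun u : ℝ => 1 / (1 + |u|) ^ n) := by
  have h1 : (Module.finrank ℝ ℝ : ℝ) < (n : ℝ) := by
    simp only [Module.finrank_self, Nat.cast_one]
    exact_mod_cast (by omega : 1 < n)
  have h := integrable_one_add_norm (E := ℝ) (μ := volume) h1
  refine h.congr (Filter.Eventually.of_forall fun u => ?_)
  show (1 + ‖u‖) ^ (-(n:ℝ)) = 1 / (1 + |u|) ^ n
  rw [Real.norm_eq_abs, Real.rpow_neg (by positivity), Real.rpow_natCast, one_div]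

lemma scaling_identity {n : ℕ} (hn : 1 ≤ n) {b : ℝ} (hb : 0 < b) :
    ∫ s : ℝ, 1 / (b + |s|) ^ n = (∫ u : ℝ, 1 / (1 + |u|) ^ n) / b ^ (n - 1) := by
  set K := ∫ u : ℝ, 1 / (1 + |u|) ^ n with hK
  have h := MeasureTheory.Measure.integral_comp_mul_left (fun s : ℝ => 1 / (b + |s|) ^ n) b
  have h2 : ∀ x : ℝ, 1 / (b + |b * x|) ^ n = (1 / b ^ n) * (1 / (1 + |x|) ^ n) := by
    intro x
    rw [abs_mul, abs_of_pos hb]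
    rw [show b + b * |x| = b * (1 + |x|) by ring, mul_pow]
    rw [one_div, one_div, one_div, mul_inv]
  simp only [h2] at h
  rw [integral_const_mul] at h
  have hbn : b ^ n = b ^ (n - 1) * b := by
    rw [← pow_succ]; congr 1; omega
  rw [abs_of_pos (inv_pos.2 hb), smul_eq_mul] at h
  have hb' : b ≠ 0 := hb.ne'
  have hb1 : b ^ (n-1) ≠ 0 := pow_ne_zero _ hb'
  field_simp at h ⊢
  rw [hbn] at h
  nlinarith [h]

/-- the decaying integral bound
`∫ |y|^{1-n}(1+t+|x−y|)^{-n} dy ≤ C_n (1+t)^{-(n-1)}`. -/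
theorem decay_integral_in_time (n : ℕ) (hn : 2 ≤ n) :
    ∃ C : ℝ, 0 < C ∧ ∀ t : ℝ, 0 ≤ t → ∀ x : E n,
      (∫ y : E n, 1 / (‖y‖ ^ (n - 1) * (1 + t + ‖x - y‖) ^ n)) ≤
        C / (1 + t) ^ (n - 1) := by
  haveI : Nonempty (Fin n) := ⟨⟨0, by omega⟩⟩
  haveI : Nontrivial (E n) := inferInstance
  set K : ℝ := ∫ u : ℝ, 1 / (1 + |u|) ^ n with hKdef
  have hKint := integrable_K hn
  have hK0 : 0 ≤ K := integral_nonneg fun u => by positivity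
  set S : ℝ := ((volume : Measure (E n)).toSphere univ).toReal with hSdef
  have hS0 : 0 ≤ S := ENNReal.toReal_nonneg
  have hSne : ((volume : Measure (E n)).toSphere univ) ≠ ⊤ := measure_ne_top _ _
  refine ⟨S * K + 1, by positivity, ?_⟩
  intro t ht x
  set b : ℝ := 1 + t with hbdef
  have hb : 0 < b := by positivity
  have hb1 : 1 ≤ b := by simp [hbdef]; linarith
  set a : ℝ := ‖x‖ with hadef
  have ha0 : 0 ≤ a := norm_nonneg x
  set f₀ : ℝ → ℝ := fun r => 1 / (r ^ (n - 1) * (b + |r - a|) ^ n) with hf₀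
  have hmeas₀ : Measurable fun r : ℝ => ENNReal.ofReal (f₀ r) := by fun_prop
  have hpt : ∀ y : E n, 1 / (‖y‖ ^ (n - 1) * (b + ‖x - y‖) ^ n) ≤ f₀ ‖y‖ := by
    intro y
    by_cases hy : y = 0
    · subst hy
      simp [hf₀, zero_pow (show n - 1 ≠ 0 by omega)]
    · have hy' : 0 < ‖y‖ := norm_pos_iff.2 hy
      have habs : |‖y‖ - a| ≤ ‖x - y‖ := by
        rw [abs_sub_comm]; exact abs_norm_sub_norm_le x y
      apply one_div_le_one_div_of_le
      · positivity
      · have hp : (b + |‖y‖ - a|) ^ n ≤ (b + ‖x - y‖) ^ n :=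
          pow_le_pow_left₀ (by positivity) (by linarith) n
        exact mul_le_mul_of_nonneg_left hp (by positivity)
  have gshift_int : Integrable (fun r : ℝ => 1 / (b + |r - a|) ^ n) := by
    have hbase : Integrable (fun s : ℝ => 1 / (b + |s|) ^ n) := by
      refine hKint.mono' (Measurable.aestronglyMeasurable (by fun_prop)) (Filter.Eventually.of_forall fun s => ?_)
      rw [Real.norm_eq_abs, abs_of_nonneg (by positivity)]
      apply one_div_le_one_div_of_le (by positivity)
      apply pow_le_pow_left₀ (by positivity) (by linarith [abs_nonneg s])
    exact hbase.comp_sub_right a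
  have hg0 : 0 ≤ᵐ[volume] fun r : ℝ => 1 / (b + |r - a|) ^ n :=
    Filter.Eventually.of_forall fun r => by positivity
  have key : ∫⁻ y : E n, ENNReal.ofReal (1 / (‖y‖ ^ (n - 1) * (b + ‖x - y‖) ^ n)) ≤
      ENNReal.ofReal ((S * K + 1) / b ^ (n - 1)) := by
    calc ∫⁻ y : E n, ENNReal.ofReal (1 / (‖y‖ ^ (n - 1) * (b + ‖x - y‖) ^ n))
        ≤ ∫⁻ y : E n, ENNReal.ofReal (f₀ ‖y‖) :=
          lintegral_mono fun y => ENNReal.ofReal_le_ofReal (hpt y)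
      _ = ((volume : Measure (E n)).toSphere univ) *
            ∫⁻ r in Ioi (0:ℝ), ENNReal.ofReal (r ^ (n - 1)) * ENNReal.ofReal (f₀ r) := by
          rw [lintegral_fun_norm_addHaar_aux (volume : Measure (E n))
            (fun r => ENNReal.ofReal (f₀ r)) hmeas₀]
          simp only [finrank_euclideanSpace_fin]
      _ = ((volume : Measure (E n)).toSphere univ) *
            ∫⁻ r in Ioi (0:ℝ), ENNReal.ofReal (1 / (b + |r - a|) ^ n) := by
          congr 1
          refine setLIntegral_congr_fun measurableSet_Ioi
            (fun r hr => ?_)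
          have hr0 : (0:ℝ) < r := hr
          rw [← ENNReal.ofReal_mul (by positivity)]
          congr 1
          have hrn : r ^ (n-1) ≠ 0 := by positivity
          have hD : (b + |r - a|) ^ n ≠ 0 := by positivity
          simp only [hf₀]
          field_simp
      _ ≤ ((volume : Measure (E n)).toSphere univ) *
            ∫⁻ r : ℝ, ENNReal.ofReal (1 / (b + |r - a|) ^ n) :=
          mul_le_mul_right (setLIntegral_le_lintegral _ _) _
      _ = ((volume : Measure (E n)).toSphere univ) *
            ENNReal.ofReal (∫ r : ℝ, 1 / (b + |r - a|) ^ n) := by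
          rw [ofReal_integral_eq_lintegral_ofReal gshift_int hg0]
      _ = ((volume : Measure (E n)).toSphere univ) * ENNReal.ofReal (K / b ^ (n - 1)) := by
          congr 1
          have hshift : ∫ r : ℝ, 1 / (b + |r - a|) ^ n = ∫ s : ℝ, 1 / (b + |s|) ^ n := by
            have := integral_add_right_eq_self (μ := volume)
              (fun s : ℝ => 1 / (b + |s|) ^ n) (-a)
            simpa [sub_eq_add_neg] using this
          rw [hshift, scaling_identity (by omega) hb]
      _ ≤ ENNReal.ofReal ((S * K + 1) / b ^ (n - 1)) := by
          rw [← ENNReal.ofReal_toReal hSne, ← ENNReal.ofReal_mul hS0]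
          apply ENNReal.ofReal_le_ofReal
          have heq : S * (K / b ^ (n - 1)) = (S * K) / b ^ (n - 1) := by ring
          rw [heq]
          gcongr
          linarith
  by_cases hint : Integrable (fun y : E n => 1 / (‖y‖ ^ (n - 1) * (b + ‖x - y‖) ^ n)) volume
  · rw [integral_eq_lintegral_of_nonneg_ae
      (Filter.Eventually.of_forall fun y => by positivity) hint.aestronglyMeasurable]
    exact ENNReal.toReal_le_of_le_ofReal (by positivity) key
  · rw [integral_undef hint]
    positivity
end
end

section
/- For every ν ≥ 1/2 there exists a constant C_ν such that for all r > 0: K_ν(r) ≤ C_ν e^{−r} r^{−1/2} (1 + r^{1/2−ν}), where K_ν(r) = ∫₀^∞ e^{−r cosh λ} cosh(νλ) dλ. -/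
noncomputable section

open MeasureTheory Real

variable {n : ℕ}

section AuxBessel
open Set


lemma exp_quadratic_lower {x : ℝ} (hx : 0 ≤ x) : 1 + x + x ^ 2 / 2 ≤ Real.exp x := by
  have h := Real.sum_le_exp_of_nonneg hx 3
  simp [Finset.sum_range_succ, Nat.factorial] at h
  nlinarith [h]

lemma cosh_lower_sq {x : ℝ} (hx : 0 ≤ x) : 1 + x ^ 2 / 4 ≤ Real.cosh x := by
  rw [Real.cosh_eq]
  have h1 := exp_quadratic_lower hx
  have h2 := Real.add_one_le_exp (-x)
  nlinarith

lemma cosh_lower_exp {x : ℝ} (hx : 1 ≤ x) : 1 + Real.exp x / 8 ≤ Real.cosh x := by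
  rw [Real.cosh_eq]
  have h1 : Real.exp 1 ≤ Real.exp x := Real.exp_le_exp.mpr hx
  have h2 := Real.exp_one_gt_d9
  have h3 := (Real.exp_pos (-x)).le
  nlinarith

lemma cosh_le_exp_self {x : ℝ} (hx : 0 ≤ x) : Real.cosh x ≤ Real.exp x := by
  rw [Real.cosh_eq]
  have := Real.exp_le_exp.mpr (neg_le_self hx)
  linarith

lemma exp_quadratic_lower' {x : ℝ} (hx : 0 ≤ x) : 1 + x + x ^ 2 / 2 ≤ Real.exp x := by
  have h := Real.sum_le_exp_of_nonneg hx 3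
  simp [Finset.sum_range_succ, Nat.factorial] at h
  nlinarith [h]

lemma gamma_type_integrable {s b : ℝ} (hs : 0 < s) (hb : 0 < b) :
    IntegrableOn (fun u : ℝ => u ^ (s - 1) * Real.exp (-(b * u))) (Set.Ioi 0) := by
  have h0 := Real.GammaIntegral_convergent hs
  have h1 : IntegrableOn (fun x : ℝ => Real.exp (-(b * x)) * (b * x) ^ (s - 1)) (Ioi 0) := by
    have := (integrableOn_Ioi_comp_mul_left_iff
      (fun x : ℝ => Real.exp (-x) * x ^ (s - 1)) 0 hb).mpr (by simpa using h0)
    simpa using this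
  have hb1 : b ^ ((1 : ℝ) - s) * b ^ (s - 1) = 1 := by
    rw [← Real.rpow_add hb]; norm_num
  refine IntegrableOn.congr_fun (h1.const_mul (b ^ ((1 : ℝ) - s))) (fun u hu => ?_)
    measurableSet_Ioi
  rw [Real.mul_rpow hb.le (le_of_lt hu)]
  linear_combination (Real.exp (-(b * u)) * u ^ (s - 1)) * hb1

lemma key_integrable {s b : ℝ} (hb : 0 < b) :
    IntegrableOn (fun x : ℝ => Real.exp (s * x) * Real.exp (-(b * Real.exp x))) (Set.Ici 0) := by
  set M : ℝ := Real.exp ((s + 1) ^ 2 / (2 * b)) with hM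
  have hmaj : IntegrableOn (fun x : ℝ => M * Real.exp (-1 * x)) (Ici 0) :=
    (Iff.mpr integrableOn_Ici_iff_integrableOn_Ioi (exp_neg_integrableOn_Ioi 0 one_pos)).const_mul M
  refine Integrable.mono' hmaj ?_ ?_
  · exact ((Real.continuous_exp.comp (continuous_const.mul continuous_id)).mul
      (Real.continuous_exp.comp (continuous_const.mul Real.continuous_exp).neg)).aestronglyMeasurable.restrict
  · rw [ae_restrict_iff' measurableSet_Ici]
    filter_upwards with x hx
    have hx' : (0 : ℝ) ≤ x := hx
    rw [Real.norm_eq_abs, abs_of_pos (by positivity), ← Real.exp_add, ← Real.exp_add]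
    apply Real.exp_le_exp.mpr
    have h1 : x ^ 2 / 2 ≤ Real.exp x := by
      have := exp_quadratic_lower' hx'; linarith
    have hD : 2 * b * ((s + 1) ^ 2 / (2 * b)) = (s + 1) ^ 2 := by field_simp
    nlinarith [sq_nonneg (b * x - (s + 1)), mul_le_mul_of_nonneg_left h1 hb.le, hD, hb]



lemma key_integral {s b : ℝ} (hs : 0 < s) (hb : 0 < b) :
    ∫ x in Set.Ioi (0 : ℝ), Real.exp (s * x) * Real.exp (-(b * Real.exp x)) ≤
      (1 / b) ^ s * Real.Gamma s := by
  set g : ℝ → ℝ := fun u => u ^ (s - 1) * Real.exp (-(b * u)) with hg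
  have hgint : IntegrableOn g (Ioi 0) := gamma_type_integrable hs hb
  have himg1 : Real.exp '' Ioi 0 ⊆ Ioi 0 := by
    rintro u ⟨x, -, rfl⟩; exact Real.exp_pos x
  have himg2 : Real.exp '' Ici 0 ⊆ Ioi 0 := by
    rintro u ⟨x, -, rfl⟩; exact Real.exp_pos x
  have hcomp : ∀ x : ℝ, (g ∘ Real.exp) x * Real.exp x
      = Real.exp (s * x) * Real.exp (-(b * Real.exp x)) := by
    intro x
    simp only [Function.comp, hg]
    rw [← Real.exp_mul, mul_right_comm, ← Real.exp_add,
      show x * (s - 1) + x = s * x by ring]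
  have hgcont : ContinuousOn g (Ioi 0) := by
    apply ContinuousOn.mul
    · exact fun x hx => ((Real.continuousAt_rpow_const x (s - 1)
        (Or.inl (ne_of_gt hx))).continuousWithinAt)
    · exact (Real.continuous_exp.comp (continuous_const.mul continuous_id).neg).continuousOn
  have hsubst : (∫ x in Ioi (0 : ℝ), (g ∘ Real.exp) x * Real.exp x)
      = ∫ u in Ioi (Real.exp 0), g u := by
    refine integral_comp_mul_deriv_Ioi Real.continuous_exp.continuousOn
      Real.tendsto_exp_atTop (fun x _ => (Real.hasDerivAt_exp x).hasDerivWithinAt)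
      (hgcont.mono himg1) (hgint.mono_set himg2) ?_
    exact IntegrableOn.congr_fun (key_integrable hb) (fun x _ => (hcomp x).symm)
      measurableSet_Ici
  have h1 : (∫ x in Ioi (0 : ℝ), Real.exp (s * x) * Real.exp (-(b * Real.exp x)))
      = ∫ u in Ioi (1 : ℝ), g u := by
    rw [Real.exp_zero] at hsubst
    rw [← hsubst]
    exact (setIntegral_congr_fun measurableSet_Ioi (fun x _ => hcomp x)).symm
  rw [h1]
  have h2 : (∫ u in Ioi (1 : ℝ), g u) ≤ ∫ u in Ioi (0 : ℝ), g u := by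
    refine setIntegral_mono_set hgint ?_ (HasSubset.Subset.eventuallyLE (Ioi_subset_Ioi zero_le_one))
    filter_upwards [ae_restrict_mem measurableSet_Ioi] with u hu
    have : (0:ℝ) < u := hu
    positivity
  refine h2.trans ?_
  rw [hg]
  exact le_of_eq (Real.integral_rpow_mul_exp_neg_mul_Ioi hs hb)



lemma pointwise_bound {ν r x : ℝ} (hν : 1 / 2 ≤ ν) (hr : 0 < r) (hx : 0 < x) :
    Real.exp (-(r * Real.cosh x)) * Real.cosh (ν * x) ≤
      (Real.exp ν * Real.exp (-r)) * Real.exp (-(r / 4) * x ^ 2) +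
        Real.exp (-r) * (Real.exp (ν * x) * Real.exp (-(r / 8 * Real.exp x))) := by
  have hν0 : (0 : ℝ) < ν := lt_of_lt_of_le (by norm_num) hν
  rcases le_or_gt x 1 with hx1 | hx1
  · have h1 : Real.cosh (ν * x) ≤ Real.exp ν := by
      refine le_trans (Real.cosh_le_cosh.mpr ?_) (cosh_le_exp_self hν0.le)
      rw [abs_of_nonneg (by positivity), abs_of_nonneg hν0.le]
      nlinarith
    have h2 : Real.exp (-(r * Real.cosh x)) ≤ Real.exp (-r) * Real.exp (-(r / 4) * x ^ 2) := by
      rw [← Real.exp_add]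
      apply Real.exp_le_exp.mpr
      have := cosh_lower_sq hx.le
      nlinarith
    have h3 : Real.exp (-(r * Real.cosh x)) * Real.cosh (ν * x) ≤
        (Real.exp (-r) * Real.exp (-(r / 4) * x ^ 2)) * Real.exp ν := by
      refine mul_le_mul h2 h1 ?_ (by positivity)
      exact le_trans zero_le_one (Real.one_le_cosh _)
    have h4 : (0:ℝ) ≤ Real.exp (-r) * (Real.exp (ν * x) * Real.exp (-(r / 8 * Real.exp x))) := by
      positivity
    nlinarith
  · have h1 : Real.cosh (ν * x) ≤ Real.exp (ν * x) := cosh_le_exp_self (by positivity)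
    have h2 : Real.exp (-(r * Real.cosh x)) ≤
        Real.exp (-r) * Real.exp (-(r / 8 * Real.exp x)) := by
      rw [← Real.exp_add]
      apply Real.exp_le_exp.mpr
      have := cosh_lower_exp hx1.le
      nlinarith
    have h3 : Real.exp (-(r * Real.cosh x)) * Real.cosh (ν * x) ≤
        (Real.exp (-r) * Real.exp (-(r / 8 * Real.exp x))) * Real.exp (ν * x) := by
      refine mul_le_mul h2 h1 ?_ (by positivity)
      exact le_trans zero_le_one (Real.one_le_cosh _)
    have h4 : (0:ℝ) ≤ (Real.exp ν * Real.exp (-r)) * Real.exp (-(r / 4) * x ^ 2) := by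
      positivity
    nlinarith

/-- pointwise bound on the modified Bessel function of the second
kind: `K_ν(r) ≲ e^{-r} r^{-1/2} (1 + r^{1/2-ν})` for `ν ≥ 1/2`. -/
theorem bessel_K_bound (ν : ℝ) (hν : 1 / 2 ≤ ν) :
    ∃ C : ℝ, 0 < C ∧ ∀ r : ℝ, 0 < r →
      Kfun ν r ≤ C * Real.exp (-r) * r ^ (-(1 : ℝ) / 2) * (1 + r ^ ((1 : ℝ) / 2 - ν)) := by
  
  have hν0 : (0 : ℝ) < ν := lt_of_lt_of_le (by norm_num) hν
  refine ⟨Real.exp ν * Real.sqrt π + (8 : ℝ) ^ ν * Real.Gamma ν, by positivity, fun r hr => ?_⟩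
  set A : ℝ := Real.exp ν * Real.sqrt π with hA
  set B : ℝ := (8 : ℝ) ^ ν * Real.Gamma ν with hB
  have hG1 : IntegrableOn (fun x : ℝ => Real.exp (-(r / 4) * x ^ 2)) (Ioi 0) :=
    (integrable_exp_neg_mul_sq (by positivity)).integrableOn
  have hG2 : IntegrableOn
      (fun x : ℝ => Real.exp (ν * x) * Real.exp (-(r / 8 * Real.exp x))) (Ioi 0) :=
    (key_integrable (by positivity)).mono_set Ioi_subset_Ici_self
  set G : ℝ → ℝ := fun x => (Real.exp ν * Real.exp (-r)) * Real.exp (-(r / 4) * x ^ 2) +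
      Real.exp (-r) * (Real.exp (ν * x) * Real.exp (-(r / 8 * Real.exp x))) with hGdef
  have hGint : IntegrableOn G (Ioi 0) :=
    (hG1.const_mul _).add (hG2.const_mul _)
  have step1 : Kfun ν r ≤ ∫ x in Ioi (0 : ℝ), G x := by
    rw [Kfun]
    refine integral_mono_of_nonneg ?_ hGint ?_
    · refine Filter.Eventually.of_forall fun x => ?_
      have := le_trans zero_le_one (Real.one_le_cosh (ν * x))
      positivity
    · exact (ae_restrict_iff' measurableSet_Ioi).mpr
        (Filter.Eventually.of_forall fun x hx => pointwise_bound hν hr hx)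
  have step2 : (∫ x in Ioi (0 : ℝ), G x)
      = (Real.exp ν * Real.exp (-r)) * (∫ x in Ioi (0:ℝ), Real.exp (-(r / 4) * x ^ 2))
        + Real.exp (-r) * (∫ x in Ioi (0:ℝ),
            Real.exp (ν * x) * Real.exp (-(r / 8 * Real.exp x))) := by
    rw [hGdef, integral_add (hG1.const_mul _) (hG2.const_mul _),
      integral_const_mul, integral_const_mul]
  have hgauss : (∫ x in Ioi (0:ℝ), Real.exp (-(r / 4) * x ^ 2))
      = Real.sqrt π * r ^ (-(1 : ℝ) / 2) := by
    rw [integral_gaussian_Ioi (r / 4)]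
    have hs4 : Real.sqrt 4 = 2 := by
      rw [show (4:ℝ) = 2 ^ 2 by norm_num, Real.sqrt_sq (by norm_num : (0:ℝ) ≤ 2)]
    have hrp : r ^ (-(1 : ℝ) / 2) = (Real.sqrt r)⁻¹ := by
      rw [show (-(1:ℝ)/2) = -(1/2) by norm_num, Real.rpow_neg hr.le, ← Real.sqrt_eq_rpow]
    have hdiv : π / (r / 4) = π * 4 / r := by field_simp
    rw [hdiv, Real.sqrt_div (by positivity) r, Real.sqrt_mul pi_pos.le, hs4, hrp]
    have hsr : Real.sqrt r ≠ 0 := (Real.sqrt_pos.mpr hr).ne'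
    field_simp
  have hkey := key_integral (s := ν) (b := r / 8) hν0 (by positivity)
  have hsecond : (∫ x in Ioi (0:ℝ), Real.exp (ν * x) * Real.exp (-(r / 8 * Real.exp x)))
      ≤ (8:ℝ) ^ ν * Real.Gamma ν * (r ^ (-(1:ℝ)/2) * r ^ ((1:ℝ)/2 - ν)) := by
    refine hkey.trans (le_of_eq ?_)
    have h8 : (1 / (r / 8) : ℝ) = 8 * r⁻¹ := by
      rw [one_div, inv_div, div_eq_mul_inv]
    rw [h8, Real.mul_rpow (by norm_num) (inv_nonneg.mpr hr.le), Real.inv_rpow hr.le,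
      ← Real.rpow_neg hr.le, show (-ν) = -(1:ℝ)/2 + ((1:ℝ)/2 - ν) by ring, Real.rpow_add hr]
    ring
  set u : ℝ := Real.exp (-r) with hu
  set p : ℝ := r ^ (-(1:ℝ)/2) with hp
  set q : ℝ := r ^ ((1:ℝ)/2 - ν) with hq
  have hu0 : 0 ≤ u := Real.exp_nonneg _
  have hp0 : 0 ≤ p := Real.rpow_nonneg hr.le _
  have hq0 : 0 ≤ q := Real.rpow_nonneg hr.le _
  have hA0 : 0 ≤ A := by rw [hA]; positivity
  have hB0 : 0 ≤ B := by
    rw [hB]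
    have := Real.Gamma_pos_of_pos hν0
    positivity
  have main2 : Kfun ν r ≤ (Real.exp ν * u) * (Real.sqrt π * p) + u * (B * (p * q)) := by
    refine step1.trans ?_
    rw [step2, hgauss]
    have h := mul_le_mul_of_nonneg_left hsecond (Real.exp_nonneg (-r))
    rw [hB]
    linarith [h]
  have hAeq : (Real.exp ν * u) * (Real.sqrt π * p) = A * u * p := by rw [hA]; ring
  nlinarith [mul_nonneg (mul_nonneg hB0 hu0) hp0,
    mul_nonneg (mul_nonneg (mul_nonneg hA0 hu0) hp0) hq0, main2, hAeq]

end AuxBessel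
end
end
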